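/- arXiv:2310.10202 — 2 statements merged into one kernel-verified Lean document; each statement's English description precedes it below -/
import Mathlib

section
/- For any real exponents c ≥ 0 and a ≥ 0, the weighted L^p norm of the anisotropic Gaussian-type kernel satisfies ‖G_t(x) · w_c(x)^{-1} · ‖x‖_s^a‖_{L^p_x(ℝ^d)} ≲ t^{-(|s|/ℓ)(1-1/p) + a/ℓ}, uniformly over p ∈ [1,∞] and t ∈ (0,1]. -/
open MeasureTheory
open scoped ENNReal

/-- Anisotropic quasi-norm `‖x‖ₛ = Σⱼ |xⱼ|^(1/sⱼ)`. -/
noncomputable def normS (d : ℕ) (s : Fin d → ℝ) (x : Fin d → ℝ) : ℝ :=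
  ∑ j, |x j| ^ (1 / s j)

/-- Polynomial weight `w_c(x) = (1 + ‖x‖ₛ)^(-c)`. -/
noncomputable def wgt (d : ℕ) (s : Fin d → ℝ) (c : ℝ) (x : Fin d → ℝ) : ℝ :=
  (1 + normS d s x) ^ (-c)

/-- Anisotropic Gaussian-type kernel
`G_t(x) = t^{-|s|/ℓ} exp(-c₁ Σⱼ (|xⱼ|/t^{sⱼ/ℓ})^{ℓ/(ℓ-sⱼ)})`. -/
noncomputable def Gker (d : ℕ) (s : Fin d → ℝ) (ℓ c₁ : ℝ) (t : ℝ) (x : Fin d → ℝ) : ℝ :=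
  t ^ (-(∑ j, s j) / ℓ) *
    Real.exp (-c₁ * ∑ j, (|x j| / t ^ (s j / ℓ)) ^ (ℓ / (ℓ - s j)))

/-!
Rescaling `yⱼ = xⱼ / t^{sⱼ/ℓ}` turns `G_t(x)` into `t^{-|s|/ℓ} G_1(y)` and `‖x‖ₛ` into
`t^{1/ℓ} ‖y‖ₛ ≤ ‖y‖ₛ`, so for `t ≤ 1` the integrand is at most `t^{(a-|s|)/ℓ}` times
`∏ⱼ exp(-c₁ |yⱼ|^{qⱼ} + (c + a) |yⱼ|^{1/sⱼ})` with `qⱼ = ℓ/(ℓ-sⱼ) > 1 ≥ 1/sⱼ`. The superlinear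
term wins, so this product is `≲ ∏ⱼ exp(-|yⱼ|)`, whose sup-norm is `≤ 1` and whose integral in `x`
is `2^d t^{|s|/ℓ}`. The interpolation `‖f‖_p ≤ ‖f‖_∞^{1-1/p} ‖f‖_1^{1/p}` gives the bound.
-/

open Real

lemma rpow_le_one_add {v σ : ℝ} (hv : 0 ≤ v) (hσ0 : 0 ≤ σ) (hσ1 : σ ≤ 1) : v ^ σ ≤ 1 + v := by
  rcases le_or_gt v 1 with h | h
  · linarith [rpow_le_one hv h hσ0]
  · linarith [rpow_le_self_of_one_le h.le hσ1]

lemma one_add_rpow_le_exp_mul {N c : ℝ} (hN : 0 ≤ N) (hc : 0 ≤ c) :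
    (1 + N) ^ c ≤ exp (c * N) := by
  rw [mul_comm, exp_mul]
  exact rpow_le_rpow (by linarith) (by linarith [add_one_le_exp N]) hc

-- Young's inequality with the conjugate exponents `q` and `q / (q - 1)`.
lemma exists_mul_le_mul_rpow_add {q ε : ℝ} (hq : 1 < q) (hε : 0 < ε) (K : ℝ) :
    ∃ B, ∀ v, 0 ≤ v → K * v ≤ ε * v ^ q + B := by
  set r := (ε * q) ^ (1 / q)
  have hr : 0 < r := by positivity
  have hpq := Real.HolderConjugate.conjExponent hq
  refine ⟨(|K| / r) ^ q.conjExponent / q.conjExponent, fun v hv => ?_⟩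
  have hrq : (r * v) ^ q / q = ε * v ^ q := by
    rw [mul_rpow hr.le hv, ← rpow_mul (by positivity), one_div_mul_cancel (by positivity),
      rpow_one]
    field_simp
  calc K * v ≤ |K| * v := mul_le_mul_of_nonneg_right (le_abs_self K) hv
    _ = (r * v) * (|K| / r) := by field_simp
    _ ≤ (r * v) ^ q / q + (|K| / r) ^ q.conjExponent / q.conjExponent :=
      young_inequality_of_nonneg (by positivity) (by positivity) hpq
    _ = _ := by rw [hrq]

lemma exists_neg_mul_rpow_add_mul_rpow_le_sub {q σ ε K : ℝ} (hq : 1 < q) (hσ0 : 0 ≤ σ)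
    (hσ1 : σ ≤ 1) (hε : 0 < ε) (hK : 0 ≤ K) :
    ∃ B, ∀ v, 0 ≤ v → -ε * v ^ q + K * v ^ σ ≤ B - v := by
  obtain ⟨B, hB⟩ := exists_mul_le_mul_rpow_add hq hε (K + 1)
  refine ⟨K + B, fun v hv => ?_⟩
  nlinarith [hB v hv, mul_le_mul_of_nonneg_left (rpow_le_one_add hv hσ0 hσ1) hK]

lemma eLpNorm_le_eLpNorm_top_rpow_mul_eLpNorm_one_rpow {α E : Type*} [MeasurableSpace α]
    {μ : Measure α} [NormedAddCommGroup E] {f : α → E} (hf : AEStronglyMeasurable f μ)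
    {p : ℝ≥0∞} (hp : 1 ≤ p) :
    eLpNorm f p μ ≤ eLpNorm f ∞ μ ^ (1 - p⁻¹.toReal) * eLpNorm f 1 μ ^ p⁻¹.toReal := by
  rcases eq_or_ne p ∞ with rfl | hp_top
  · simp
  have hp0 : p ≠ 0 := (zero_lt_one.trans_le hp).ne'
  set r := p.toReal
  have hr : 1 ≤ r := by simpa using ENNReal.toReal_mono hp_top hp
  have hpow : ∀ᵐ x ∂μ, ‖f x‖ₑ ^ r ≤ eLpNorm f ∞ μ ^ (r - 1) * ‖f x‖ₑ := by
    filter_upwards [enorm_ae_le_eLpNormEssSup f μ] with x hx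
    calc ‖f x‖ₑ ^ r = ‖f x‖ₑ ^ (r - 1) * ‖f x‖ₑ ^ (1 : ℝ) := by
          rw [← ENNReal.rpow_add_of_nonneg _ _ (by linarith) zero_le_one, sub_add_cancel]
      _ ≤ eLpNorm f ∞ μ ^ (r - 1) * ‖f x‖ₑ := by
          rw [ENNReal.rpow_one, eLpNorm_exponent_top]; gcongr
  calc eLpNorm f p μ = (∫⁻ x, ‖f x‖ₑ ^ r ∂μ) ^ r⁻¹ := by
        rw [eLpNorm_eq_lintegral_rpow_enorm_toReal hp0 hp_top, one_div]
    _ ≤ (eLpNorm f ∞ μ ^ (r - 1) * eLpNorm f 1 μ) ^ r⁻¹ := by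
        rw [eLpNorm_one_eq_lintegral_enorm, ← lintegral_const_mul'' _ hf.enorm]
        gcongr ?_ ^ _
        exact lintegral_mono_ae hpow
    _ = eLpNorm f ∞ μ ^ (1 - p⁻¹.toReal) * eLpNorm f 1 μ ^ p⁻¹.toReal := by
        rw [ENNReal.mul_rpow_of_nonneg _ _ (by positivity), ← ENNReal.rpow_mul,
          ENNReal.toReal_inv]
        have hr0 : r ≠ 0 := by positivity
        congr 2
        change (r - 1) * r⁻¹ = 1 - r⁻¹
        field_simp

lemma integral_exp_neg_abs : ∫ u : ℝ, exp (-|u|) = 2 := by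
  rw [integral_comp_abs (f := fun u => exp (-u)), integral_exp_neg_Ioi_zero, mul_one]

lemma integrable_exp_neg_abs : Integrable fun u : ℝ => exp (-|u|) :=
  .of_integral_ne_zero (by rw [integral_exp_neg_abs]; norm_num)

section ProductDecay

variable {ι : Type*} [Fintype ι] {L : ι → ℝ}

lemma integrable_prod_exp_neg_abs_div (hL : ∀ i, 0 < L i) :
    Integrable fun x : ι → ℝ => ∏ i, exp (-|x i| / L i) := by
  refine Integrable.fintype_prod (f := fun i u => exp (-|u| / L i)) fun i =>
    (integrable_exp_neg_abs.comp_div (hL i).ne').congr ?_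
  filter_upwards with u
  rw [abs_div, abs_of_pos (hL i), neg_div]

lemma integral_prod_exp_neg_abs_div (hL : ∀ i, 0 < L i) :
    ∫ x : ι → ℝ, ∏ i, exp (-|x i| / L i) = 2 ^ Fintype.card ι * ∏ i, L i := by
  have h : ∀ i, ∫ u : ℝ, exp (-|u| / L i) = L i * 2 := fun i => by
    simpa only [abs_div, abs_of_pos (hL i), neg_div, integral_exp_neg_abs, smul_eq_mul] using
      Measure.integral_comp_div (fun v : ℝ => exp (-|v|)) (L i)
  rw [integral_fintype_prod_volume_eq_prod (fun i u => exp (-|u| / L i)),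
    Finset.prod_congr rfl fun i _ => h i, Finset.prod_mul_distrib, Finset.prod_const,
    Finset.card_univ, mul_comm]

lemma eLpNorm_le_of_norm_le_mul_prod_exp_neg_abs_div {f : (ι → ℝ) → ℝ} {M : ℝ} {p : ℝ≥0∞}
    (hL : ∀ i, 0 < L i) (hM : 0 ≤ M) (hf : ∀ x, ‖f x‖ ≤ M * ∏ i, exp (-|x i| / L i))
    (hp : 1 ≤ p) :
    eLpNorm f p volume ≤
      ENNReal.ofReal (2 ^ Fintype.card ι * M * (∏ i, L i) ^ p⁻¹.toReal) := by
  set g : (ι → ℝ) → ℝ := fun x => M * ∏ i, exp (-|x i| / L i)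
  set θ := p⁻¹.toReal
  set A := ENNReal.ofReal (2 ^ Fintype.card ι * M)
  set B := ENNReal.ofReal (∏ i, L i)
  have hθ1 : θ ≤ 1 :=
    (ENNReal.toReal_mono ENNReal.one_ne_top (ENNReal.inv_le_one.2 hp)).trans_eq ENNReal.toReal_one
  have hL0 : 0 ≤ ∏ i, L i := Finset.prod_nonneg fun i _ => (hL i).le
  have hg_top : eLpNorm g ∞ volume ≤ A := by
    rw [eLpNorm_exponent_top]
    refine eLpNormEssSup_le_of_ae_bound (.of_forall fun x => ?_)
    have hprod : ∏ i, exp (-|x i| / L i) ≤ 1 :=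
      Finset.prod_le_one (fun i _ => (exp_pos _).le) fun i _ =>
        exp_le_one_iff.2 (div_nonpos_of_nonpos_of_nonneg (neg_nonpos.2 (abs_nonneg _)) (hL i).le)
    rw [norm_of_nonneg (by positivity)]
    calc g x ≤ M := mul_le_of_le_one_right hM hprod
      _ ≤ 2 ^ Fintype.card ι * M := le_mul_of_one_le_left hM (one_le_pow₀ one_le_two)
  have hg_one : eLpNorm g 1 volume = A * B := by
    rw [eLpNorm_one_eq_lintegral_enorm, ← ofReal_integral_norm_eq_lintegral_enorm
      ((integrable_prod_exp_neg_abs_div hL).const_mul M)]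
    simp only [norm_mul, norm_prod, Real.norm_eq_abs, abs_exp, abs_of_nonneg hM]
    rw [integral_const_mul, integral_prod_exp_neg_abs_div hL, ← ENNReal.ofReal_mul (by positivity)]
    ring_nf
  have hg_meas : AEStronglyMeasurable g volume := by fun_prop
  calc eLpNorm f p volume ≤ eLpNorm g p volume := eLpNorm_mono_real hf
    _ ≤ eLpNorm g ∞ volume ^ (1 - θ) * eLpNorm g 1 volume ^ θ :=
      eLpNorm_le_eLpNorm_top_rpow_mul_eLpNorm_one_rpow hg_meas hp
    _ ≤ A ^ (1 - θ) * (A * B) ^ θ := by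
      rw [hg_one]; gcongr
    _ = A * B ^ θ := by
      rw [ENNReal.mul_rpow_of_nonneg _ _ (by positivity), ← mul_assoc,
        ← ENNReal.rpow_add_of_nonneg _ _ (by linarith) (by positivity), sub_add_cancel,
        ENNReal.rpow_one]
    _ = _ := by
      rw [ENNReal.ofReal_rpow_of_nonneg hL0 (by positivity), ← ENNReal.ofReal_mul (by positivity)]

end ProductDecay

noncomputable def anisoRescale (d : ℕ) (s : Fin d → ℝ) (ℓ t : ℝ) (x : Fin d → ℝ) : Fin d → ℝ :=
  fun j => x j / t ^ (s j / ℓ)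

section Kernel

variable {d : ℕ} {s : Fin d → ℝ} {ℓ t : ℝ}

lemma normS_nonneg (x : Fin d → ℝ) : 0 ≤ normS d s x :=
  Finset.sum_nonneg fun _ _ => rpow_nonneg (abs_nonneg _) _

lemma abs_anisoRescale (ht : 0 < t) (x : Fin d → ℝ) (j : Fin d) :
    |anisoRescale d s ℓ t x j| = |x j| / t ^ (s j / ℓ) := by
  rw [anisoRescale, abs_div, abs_of_pos (rpow_pos_of_pos ht _)]

lemma normS_eq_rpow_mul_normS_anisoRescale (ht : 0 < t) (hs : ∀ j, s j ≠ 0)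
    (x : Fin d → ℝ) : normS d s x = t ^ (1 / ℓ) * normS d s (anisoRescale d s ℓ t x) := by
  rw [normS, normS, Finset.mul_sum]
  refine Finset.sum_congr rfl fun j _ => ?_
  rw [abs_anisoRescale ht, div_rpow (abs_nonneg _) (rpow_nonneg ht.le _), ← rpow_mul ht.le,
    div_mul_div_comm, mul_one, mul_comm ℓ, ← div_div, div_self (hs j),
    mul_div_cancel₀ _ (rpow_pos_of_pos ht _).ne']

lemma normS_le_normS_anisoRescale (ht0 : 0 < t) (ht1 : t ≤ 1) (hs : ∀ j, 0 < s j)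
    (hℓ : ∀ j, s j < ℓ) (x : Fin d → ℝ) : normS d s x ≤ normS d s (anisoRescale d s ℓ t x) := by
  refine Finset.sum_le_sum fun j _ => rpow_le_rpow (abs_nonneg _) ?_ (one_div_nonneg.2 (hs j).le)
  rw [abs_anisoRescale ht0]
  exact le_div_self (abs_nonneg _) (rpow_pos_of_pos ht0 _)
    (rpow_le_one ht0.le ht1 (div_nonneg (hs j).le ((hs j).trans (hℓ j)).le))

lemma inv_wgt_mul_normS_rpow_le (ht0 : 0 < t) (ht1 : t ≤ 1) (hs : ∀ j, 0 < s j)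
    (hℓ : ∀ j, s j < ℓ) {c a : ℝ} (hc : 0 ≤ c) (ha : 0 ≤ a) (x : Fin d → ℝ) :
    (wgt d s c x)⁻¹ * normS d s x ^ a ≤
      t ^ (a / ℓ) * exp ((c + a) * normS d s (anisoRescale d s ℓ t x)) := by
  set N := normS d s (anisoRescale d s ℓ t x)
  have hN : 0 ≤ N := normS_nonneg _
  have hweight : (wgt d s c x)⁻¹ ≤ exp (c * N) := by
    rw [wgt, rpow_neg (by linarith [normS_nonneg (s := s) x]), inv_inv]
    calc (1 + normS d s x) ^ c ≤ (1 + N) ^ c := by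
          gcongr
          · linarith [normS_nonneg (s := s) x]
          · exact normS_le_normS_anisoRescale ht0 ht1 hs hℓ x
      _ ≤ exp (c * N) := one_add_rpow_le_exp_mul hN hc
  have hpow : normS d s x ^ a ≤ t ^ (a / ℓ) * exp (a * N) := by
    rw [normS_eq_rpow_mul_normS_anisoRescale ht0 (fun j => (hs j).ne') x,
      mul_rpow (rpow_nonneg ht0.le _) hN, ← rpow_mul ht0.le, one_div_mul_eq_div]
    gcongr
    calc N ^ a ≤ (1 + N) ^ a := by gcongr; linarith
      _ ≤ exp (a * N) := one_add_rpow_le_exp_mul hN ha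
  calc (wgt d s c x)⁻¹ * normS d s x ^ a ≤ exp (c * N) * (t ^ (a / ℓ) * exp (a * N)) :=
        mul_le_mul hweight hpow (rpow_nonneg (normS_nonneg x) a) (exp_pos _).le
      _ = t ^ (a / ℓ) * exp ((c + a) * N) := by rw [add_mul, exp_add]; ring

lemma Gker_eq_anisoRescale (ht : 0 < t) (c₁ : ℝ) (x : Fin d → ℝ) :
    Gker d s ℓ c₁ t x = t ^ (-(∑ j, s j) / ℓ) *
      exp (-c₁ * ∑ j, |anisoRescale d s ℓ t x j| ^ (ℓ / (ℓ - s j))) := by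
  simp only [Gker, abs_anisoRescale ht]

lemma Gker_mul_inv_wgt_mul_normS_rpow_le (ht0 : 0 < t) (ht1 : t ≤ 1) (hs : ∀ j, 0 < s j)
    (hℓ : ∀ j, s j < ℓ) {c₁ c a : ℝ} (hc : 0 ≤ c) (ha : 0 ≤ a) (x : Fin d → ℝ) :
    Gker d s ℓ c₁ t x * (wgt d s c x)⁻¹ * normS d s x ^ a ≤
      t ^ ((a - ∑ j, s j) / ℓ) * exp (∑ j, (-c₁ * |anisoRescale d s ℓ t x j| ^ (ℓ / (ℓ - s j))
        + (c + a) * |anisoRescale d s ℓ t x j| ^ (1 / s j))) := by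
  rw [Gker_eq_anisoRescale ht0, mul_assoc]
  calc _ ≤ t ^ (-(∑ j, s j) / ℓ) * exp (-c₁ * ∑ j, |anisoRescale d s ℓ t x j| ^ (ℓ / (ℓ - s j)))
        * (t ^ (a / ℓ) * exp ((c + a) * normS d s (anisoRescale d s ℓ t x))) :=
        mul_le_mul_of_nonneg_left (inv_wgt_mul_normS_rpow_le ht0 ht1 hs hℓ hc ha x)
          (by positivity)
    _ = _ := by
        rw [show (a - ∑ j, s j) / ℓ = -(∑ j, s j) / ℓ + a / ℓ by ring, rpow_add ht0,
          Finset.sum_add_distrib, ← Finset.mul_sum, ← Finset.mul_sum, exp_add, normS]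
        ring

lemma exists_norm_Gker_mul_inv_wgt_mul_normS_rpow_le (hs : ∀ j, 1 ≤ s j)
    (hℓ : ∀ j, s j < ℓ) {c₁ c a : ℝ} (hc₁ : 0 < c₁) (hc : 0 ≤ c) (ha : 0 ≤ a) :
    ∃ K, 0 < K ∧ ∀ t, 0 < t → t ≤ 1 → ∀ x,
      ‖Gker d s ℓ c₁ t x * (wgt d s c x)⁻¹ * normS d s x ^ a‖ ≤
        K * t ^ ((a - ∑ j, s j) / ℓ) * ∏ j, exp (-|x j| / t ^ (s j / ℓ)) := by
  have hs0 : ∀ j, 0 < s j := fun j => one_pos.trans_le (hs j)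
  have hq : ∀ j, 1 < ℓ / (ℓ - s j) := fun j =>
    (one_lt_div (sub_pos.2 (hℓ j))).2 (by linarith [hs0 j])
  choose B hB using fun j => exists_neg_mul_rpow_add_mul_rpow_le_sub (hq j)
    (one_div_nonneg.2 (hs0 j).le) (div_le_one_of_le₀ (hs j) (hs0 j).le) hc₁ (add_nonneg hc ha)
  refine ⟨exp (∑ j, B j), exp_pos _, fun t ht0 ht1 x => ?_⟩
  have hN := normS_nonneg (s := s) x
  have hf : 0 ≤ Gker d s ℓ c₁ t x * (wgt d s c x)⁻¹ * normS d s x ^ a := by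
    unfold Gker wgt
    exact mul_nonneg (mul_nonneg (by positivity) (inv_nonneg.2 (rpow_nonneg (by linarith) _)))
      (rpow_nonneg hN _)
  rw [norm_of_nonneg hf]
  refine (Gker_mul_inv_wgt_mul_normS_rpow_le ht0 ht1 hs0 hℓ hc ha x).trans ?_
  calc _ ≤ t ^ ((a - ∑ j, s j) / ℓ) *
        exp (∑ j, (B j - |anisoRescale d s ℓ t x j|)) := by
        gcongr with j
        exact hB j _ (abs_nonneg _)
    _ = _ := by
        simp only [sub_eq_add_neg, Finset.sum_add_distrib, exp_add, exp_sum,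
          abs_anisoRescale ht0, neg_div]
        ring

end Kernel

theorem gaussian_weighted_Lp_bound_general
    (d : ℕ) (s : Fin d → ℝ) (hs : ∀ j, 1 ≤ s j)
    (ℓ : ℝ) (hℓ : ∀ j, s j < ℓ) (c₁ : ℝ) (hc₁ : 0 < c₁)
    (c a : ℝ) (hc : 0 ≤ c) (ha : 0 ≤ a) :
    ∃ C : ℝ, 0 < C ∧ ∀ p : ℝ≥0∞, 1 ≤ p → ∀ t : ℝ, 0 < t → t ≤ 1 →
      eLpNorm (fun x => Gker d s ℓ c₁ t x * (wgt d s c x)⁻¹ * normS d s x ^ a) p volume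
        ≤ ENNReal.ofReal (C * t ^ (-(∑ j, s j) / ℓ * (1 - (p⁻¹).toReal) + a / ℓ)) := by
  obtain ⟨K, hK, hbound⟩ := exists_norm_Gker_mul_inv_wgt_mul_normS_rpow_le hs hℓ hc₁ hc ha
  refine ⟨2 ^ d * K, by positivity, fun p hp t ht0 ht1 => ?_⟩
  calc _ ≤ ENNReal.ofReal (2 ^ Fintype.card (Fin d) * (K * t ^ ((a - ∑ j, s j) / ℓ)) *
          (∏ j, t ^ (s j / ℓ)) ^ p⁻¹.toReal) :=
        eLpNorm_le_of_norm_le_mul_prod_exp_neg_abs_div (fun j => rpow_pos_of_pos ht0 _)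
          (by positivity) (hbound t ht0 ht1) hp
    _ = _ := by
        rw [Fintype.card_fin, ← rpow_sum_of_pos ht0, ← Finset.sum_div, ← rpow_mul ht0.le,
          mul_assoc, mul_assoc, ← rpow_add ht0, ← mul_assoc]
        congr 3
        ring

/-- For `c ≥ 0` and `a ≥ 0`,
`‖G_t(x) w_c(x)⁻¹ ‖x‖ₛ^a‖_{L^p_x(ℝ^d)} ≲ t^{-(|s|/ℓ)(1-1/p)+a/ℓ}`
uniformly over `p ∈ [1,∞]` and `t ∈ (0,1]`. -/
theorem gaussian_weighted_Lp_bound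
    (d : ℕ) (hd : 0 < d) (s : Fin d → ℝ) (hs : ∀ j, 1 ≤ s j)
    (ℓ : ℝ) (hℓ : ∀ j, s j < ℓ) (c₁ : ℝ) (hc₁ : 0 < c₁)
    (c a : ℝ) (hc : 0 ≤ c) (ha : 0 ≤ a) :
    ∃ C : ℝ, 0 < C ∧ ∀ p : ℝ≥0∞, 1 ≤ p → ∀ t : ℝ, 0 < t → t ≤ 1 →
      eLpNorm (fun x => Gker d s ℓ c₁ t x * (wgt d s c x)⁻¹ * normS d s x ^ a) p volume
        ≤ ENNReal.ofReal (C * t ^ (-(∑ j, s j) / ℓ * (1 - (p⁻¹).toReal) + a / ℓ)) :=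
  gaussian_weighted_Lp_bound_general d s hs ℓ hℓ c₁ hc₁ c a hc ha
end

section
/- (Stability of degeneracy lines under ε-perturbation.) For each tree μ write r_{ε,∞}(μ) = n_μ(r_0 − ε) + m_μ β_0 + Σ_j l_μ^j s_j with n_μ ≥ 1, and set p_ε(μ) = |s|/(−r_{ε,∞}(μ)) whenever r_{ε,∞}(μ) < 0. If two trees μ, ν satisfy p_0(μ) = p_0(ν) and r_0 ∉ ℚ[β_0, s], then n_μ = n_ν and consequently p_ε(μ) = p_ε(ν) for every ε ≥ 0 for which both are defined. Conversely, if p_0(μ) < p_0(ν), then p_ε(μ) < p_ε(ν) for all sufficiently small ε ≥ 0. -/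
/-!
Equal exponents at `ε = 0` force equal degrees. Since `r₀ ∉ ℚ[β₀, s]`, the coefficient `n` of `r₀`
in a degree is determined by its value, and the degree moves with `ε` as `-n ε`, so equal degrees
stay equal. A strict inequality persists for small `ε` because the exponents are continuous in `ε`.
-/

open Finset

/-- The paper's `ℚ[β, s]`. -/
noncomputable def ratSpan {d : ℕ} (β : ℝ) (s : Fin d → ℝ) : Submodule ℚ ℝ :=
  Submodule.span ℚ (insert β (Set.range s))

lemma mem_ratSpan_iff {d : ℕ} {β x : ℝ} {s : Fin d → ℝ} :
    x ∈ ratSpan β s ↔ ∃ (q : ℚ) (qs : Fin d → ℚ), x = (q : ℝ) * β + ∑ j, (qs j : ℝ) * s j := by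
  simp only [ratSpan, Submodule.mem_span_insert, Submodule.mem_span_range_iff_exists_fun,
    Rat.smul_def]
  constructor
  · rintro ⟨q, _, ⟨qs, rfl⟩, rfl⟩
    exact ⟨q, qs, rfl⟩
  · rintro ⟨q, qs, rfl⟩
    exact ⟨q, _, ⟨qs, rfl⟩, rfl⟩

lemma eq_of_mul_add_eq_mul_add {V : Submodule ℚ ℝ} {r : ℝ} (hr : r ∉ V) {q q' : ℚ} {x x' : ℝ}
    (hx : x ∈ V) (hx' : x' ∈ V) (h : (q : ℝ) * r + x = (q' : ℝ) * r + x') : q = q' := by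
  by_contra hne
  have hmem : (q - q') • r ∈ V := by
    have : (q - q') • r = x' - x := by rw [Rat.smul_def]; push_cast; linarith
    exact this ▸ V.sub_mem hx' hx
  exact hr ((V.smul_mem_iff (sub_ne_zero.mpr hne)).mp hmem)

section TreeDegree

variable {d : ℕ} (r0 β0 : ℝ) (s : Fin d → ℝ)

/-- The degree `r_{ε,∞}(μ) = n_μ (r₀ - ε) + m_μ β₀ + Σ_j l_μ^j s_j` of a tree at `p = ∞`. -/
def treeDegree (n : ℕ) (m : ℤ) (l : Fin d → ℤ) (ε : ℝ) : ℝ :=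
  n * (r0 - ε) + m * β0 + ∑ j, (l j : ℝ) * s j

/-- The exponent `p_ε(μ) = |s| / (-r_{ε,∞}(μ))`. -/
noncomputable def treeExponent (n : ℕ) (m : ℤ) (l : Fin d → ℤ) (ε : ℝ) : ℝ :=
  (∑ j, s j) / -treeDegree r0 β0 s n m l ε

variable {r0 β0 s}

lemma treeDegree_sub_treeDegree_zero (n : ℕ) (m : ℤ) (l : Fin d → ℤ) (ε : ℝ) :
    treeDegree r0 β0 s n m l ε = treeDegree r0 β0 s n m l 0 - n * ε := by
  simp only [treeDegree]; ring

lemma intCombination_mem_ratSpan (m : ℤ) (l : Fin d → ℤ) :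
    (m : ℝ) * β0 + ∑ j, (l j : ℝ) * s j ∈ ratSpan β0 s :=
  mem_ratSpan_iff.mpr ⟨m, fun j => l j, by simp⟩

lemma eq_of_treeDegree_zero_eq (hirr : r0 ∉ ratSpan β0 s) {n n' : ℕ} {m m' : ℤ}
    {l l' : Fin d → ℤ} (h : treeDegree r0 β0 s n m l 0 = treeDegree r0 β0 s n' m' l' 0) :
    n = n' := by
  have key := eq_of_mul_add_eq_mul_add hirr (intCombination_mem_ratSpan m l)
    (intCombination_mem_ratSpan m' l') (q := n) (q' := n')
    (by simpa only [treeDegree, sub_zero, Rat.cast_natCast, add_assoc] using h)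
  exact_mod_cast key

lemma treeDegree_eq_of_treeExponent_eq (hS : ∑ j, s j ≠ 0) {n n' : ℕ} {m m' : ℤ}
    {l l' : Fin d → ℤ} {ε : ℝ}
    (h : treeExponent r0 β0 s n m l ε = treeExponent r0 β0 s n' m' l' ε) :
    treeDegree r0 β0 s n m l ε = treeDegree r0 β0 s n' m' l' ε :=
  neg_injective (inv_injective (mul_right_injective₀ hS h))

lemma continuousAt_treeExponent {n : ℕ} {m : ℤ} {l : Fin d → ℤ} {ε : ℝ}
    (h : treeDegree r0 β0 s n m l ε ≠ 0) : ContinuousAt (treeExponent r0 β0 s n m l) ε := by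
  have hdeg : Continuous (treeDegree r0 β0 s n m l) := by
    unfold treeDegree; fun_prop
  exact continuousAt_const.div hdeg.continuousAt.neg (neg_ne_zero.mpr h)

end TreeDegree

theorem degeneracy_line_stability_general
    (d : ℕ) (hd : 0 < d) (s : Fin d → ℝ) (hs : ∀ j, 1 ≤ s j)
    (r0 β0 : ℝ)
    (hirr : ¬ ∃ (q : ℚ) (qs : Fin d → ℚ), r0 = (q : ℝ) * β0 + ∑ j, (qs j : ℝ) * s j)
    (nμ nν : ℕ)
    (mμ mν : ℤ) (lμ lν : Fin d → ℤ) :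
    let rE : ℕ → ℤ → (Fin d → ℤ) → ℝ → ℝ :=
      fun n m l ε => (n : ℝ) * (r0 - ε) + (m : ℝ) * β0 + ∑ j, (l j : ℝ) * s j
    let pE : ℕ → ℤ → (Fin d → ℤ) → ℝ → ℝ :=
      fun n m l ε => (∑ j, s j) / (-(rE n m l ε))
    rE nμ mμ lμ 0 < 0 → rE nν mν lν 0 < 0 →
    ((pE nμ mμ lμ 0 = pE nν mν lν 0 →
        nμ = nν ∧ ∀ ε : ℝ, 0 ≤ ε → pE nμ mμ lμ ε = pE nν mν lν ε) ∧
     (pE nμ mμ lμ 0 < pE nν mν lν 0 →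
        ∃ ε0 : ℝ, 0 < ε0 ∧ ∀ ε : ℝ, 0 ≤ ε → ε < ε0 →
          pE nμ mμ lμ ε < pE nν mν lν ε)) := by
  intro rE pE hμ hν
  have hS : 0 < ∑ j, s j := by
    have : NeZero d := ⟨hd.ne'⟩
    exact sum_pos (fun j _ => one_pos.trans_le (hs j)) univ_nonempty
  refine ⟨fun hp => ?_, fun hp => ?_⟩
  · have hdeg0 := treeDegree_eq_of_treeExponent_eq hS.ne' hp
    obtain rfl := eq_of_treeDegree_zero_eq (mt mem_ratSpan_iff.mp hirr) hdeg0
    refine ⟨rfl, fun ε _ => ?_⟩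
    change treeExponent r0 β0 s nμ mμ lμ ε = treeExponent r0 β0 s nμ mν lν ε
    rw [treeExponent, treeExponent, treeDegree_sub_treeDegree_zero nμ mμ lμ ε,
      treeDegree_sub_treeDegree_zero nμ mν lν ε, hdeg0]
  · have hlt : ∀ᶠ ε in nhds 0,
        treeExponent r0 β0 s nμ mμ lμ ε < treeExponent r0 β0 s nν mν lν ε :=
      (continuousAt_treeExponent hμ.ne).eventually_lt (continuousAt_treeExponent hν.ne) hp
    obtain ⟨ε0, hε0, hball⟩ := Metric.eventually_nhds_iff.mp hlt
    exact ⟨ε0, hε0, fun ε hε hεε0 => hball (by rwa [Real.dist_0_eq_abs, abs_of_nonneg hε])⟩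

/-- Stability of degeneracy lines under `ε`-perturbation.  With
`r_ε(μ) = n_μ(r₀-ε) + m_μ β₀ + Σ_j l_μ^j s_j` and `p_ε(μ) = |s|/(-r_ε(μ))`:
if `p₀(μ) = p₀(ν)` and `r₀ ∉ ℚ[β₀,s]` then `n_μ = n_ν` and `p_ε(μ) = p_ε(ν)` for
all `ε ≥ 0`; and if `p₀(μ) < p₀(ν)` then `p_ε(μ) < p_ε(ν)` for all small `ε ≥ 0`. -/
theorem degeneracy_line_stability
    (d : ℕ) (hd : 0 < d) (s : Fin d → ℝ) (hs : ∀ j, 1 ≤ s j)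
    (r0 β0 : ℝ) (hβ0 : 0 < β0)
    (hirr : ¬ ∃ (q : ℚ) (qs : Fin d → ℚ), r0 = (q : ℝ) * β0 + ∑ j, (qs j : ℝ) * s j)
    (nμ nν : ℕ) (hnμ : 1 ≤ nμ) (hnν : 1 ≤ nν)
    (mμ mν : ℤ) (lμ lν : Fin d → ℤ) :
    let rE : ℕ → ℤ → (Fin d → ℤ) → ℝ → ℝ :=
      fun n m l ε => (n : ℝ) * (r0 - ε) + (m : ℝ) * β0 + ∑ j, (l j : ℝ) * s j
    let pE : ℕ → ℤ → (Fin d → ℤ) → ℝ → ℝ :=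
      fun n m l ε => (∑ j, s j) / (-(rE n m l ε))
    rE nμ mμ lμ 0 < 0 → rE nν mν lν 0 < 0 →
    ((pE nμ mμ lμ 0 = pE nν mν lν 0 →
        nμ = nν ∧ ∀ ε : ℝ, 0 ≤ ε → pE nμ mμ lμ ε = pE nν mν lν ε) ∧
     (pE nμ mμ lμ 0 < pE nν mν lν 0 →
        ∃ ε0 : ℝ, 0 < ε0 ∧ ∀ ε : ℝ, 0 ≤ ε → ε < ε0 →
          pE nμ mμ lμ ε < pE nν mν lν ε)) :=
  degeneracy_line_stability_general d hd s hs r0 β0 hirr nμ nν mμ mν lμ lν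
end
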